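/- arXiv:1403.7889 — 5 statements merged into one kernel-verified Lean document; each statement's English description precedes it below -/
import Mathlib

section
/- Let σ > 0 and Υ > 0, and for each n ≥ 1 and 1 ≤ j ≤ n set λ^n_j(σ) = σ²/n + 4Υ sin²[(π/2)·(2j−1)/(2n+1)]. Let (τ_n) be a sequence of real numbers converging to some τ ∈ (−1,0) ∪ (0,1). Then the sequence (1/(2n+1)) · Σ_{j=1}^n cos[πτ_n(2j−1)] / λ^n_j(σ) is bounded as n→∞. -/
/-!
Since `2 sin x · Σ_{j=1}^m cos((2j-1)x) = sin(2mx)`, the partial sums of `cos(πτ_n(2j-1))` are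
bounded by `1/(2|sin πτ_n|)`, uniformly in `m`. The weights `1/λ^n_j` are positive, decrease in
`j` and are at most `n/σ²`, so Abel's inequality bounds the sum by `n/(2σ²|sin πτ_n|)`; after
division by `2n+1` this is at most `1/(4σ²|sin πτ_n|)`, which converges since `sin πτ ≠ 0`.
-/

open Real Filter Finset

theorem abs_sum_mul_le_of_antitoneOn {R : Type*} [CommRing R] [LinearOrder R]
    [IsStrictOrderedRing R] {c a : ℕ → R} {C : R} {n : ℕ} (hn : 1 ≤ n)
    (hc : ∀ m ≤ n, |∑ j ∈ Icc 1 m, c j| ≤ C) (ha : AntitoneOn a (Set.Icc 1 n))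
    (ha0 : 0 ≤ a n) :
    |∑ j ∈ Icc 1 n, c j * a j| ≤ C * a 1 := by
  induction n, hn using Nat.le_induction generalizing a with
  | base =>
    simpa [abs_mul, abs_of_nonneg ha0] using mul_le_mul_of_nonneg_right (hc 1 le_rfl) ha0
  | succ n hn ih =>
    -- Apply the induction hypothesis to the weights `a j - a (n + 1)`, which vanish at `n + 1`.
    have hsplit : ∑ j ∈ Icc 1 (n + 1), c j * a j = ∑ j ∈ Icc 1 n, c j * (a j - a (n + 1))
        + (∑ j ∈ Icc 1 (n + 1), c j) * a (n + 1) := by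
      simp only [mul_sub, sum_sub_distrib, ← sum_mul,
        sum_Icc_succ_top (by omega : 1 ≤ n + 1)]
      ring
    have hdecr : a (n + 1) ≤ a n := ha ⟨hn, by omega⟩ ⟨by omega, le_rfl⟩ (by omega)
    have hhead := ih (a := fun j => a j - a (n + 1)) (fun m hm => hc m (by omega))
      (fun i hi j hj hij => sub_le_sub_right
        (ha.mono (Set.Icc_subset_Icc_right n.le_succ) hi hj hij) _)
      (sub_nonneg.mpr hdecr)
    have htail : |(∑ j ∈ Icc 1 (n + 1), c j) * a (n + 1)| ≤ C * a (n + 1) := by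
      rw [abs_mul, abs_of_nonneg ha0]
      exact mul_le_mul_of_nonneg_right (hc (n + 1) le_rfl) ha0
    rw [hsplit]
    linarith [abs_add_le (∑ j ∈ Icc 1 n, c j * (a j - a (n + 1)))
      ((∑ j ∈ Icc 1 (n + 1), c j) * a (n + 1))]

theorem two_mul_sin_mul_sum_cos_odd (x : ℝ) (m : ℕ) :
    2 * sin x * ∑ j ∈ Icc 1 m, cos (x * (2 * (j : ℝ) - 1)) = sin (2 * m * x) := by
  induction m with
  | zero => simp
  | succ m ih =>
    rw [sum_Icc_succ_top (by omega : 1 ≤ m + 1), mul_add, ih]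
    push_cast
    rw [show 2 * ((m : ℝ) + 1) * x = 2 * m * x + 2 * x by ring,
      show x * (2 * ((m : ℝ) + 1) - 1) = 2 * m * x + x by ring,
      sin_add, cos_add, sin_two_mul, cos_two_mul]
    linear_combination (-2 * sin (2 * m * x)) * sin_sq_add_cos_sq x

theorem abs_sum_cos_odd_le {x : ℝ} (hx : sin x ≠ 0) (m : ℕ) :
    |∑ j ∈ Icc 1 m, cos (x * (2 * (j : ℝ) - 1))| ≤ (2 * |sin x|)⁻¹ := by
  have hpos : 0 < 2 * |sin x| := by positivity
  rw [← one_div, le_div_iff₀' hpos]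
  calc 2 * |sin x| * |∑ j ∈ Icc 1 m, cos (x * (2 * (j : ℝ) - 1))|
      = |sin (2 * m * x)| := by rw [← two_mul_sin_mul_sum_cos_odd, abs_mul, abs_mul, abs_two]
    _ ≤ 1 := abs_sin_le_one _

/-- The eigenvalue `λ^n_j(σ)`. -/
noncomputable def covEigenvalue (σ Υ : ℝ) (n j : ℕ) : ℝ :=
  σ ^ 2 / n + 4 * Υ * sin (π / 2 * ((2 * (j : ℝ) - 1) / (2 * (n : ℝ) + 1))) ^ 2

section covEigenvalue

variable {σ Υ : ℝ} {n : ℕ}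

theorem sq_div_le_covEigenvalue (hΥ : 0 ≤ Υ) (j : ℕ) :
    σ ^ 2 / n ≤ covEigenvalue σ Υ n j :=
  le_add_of_nonneg_right (by positivity)

theorem covEigenvalue_pos (hσ : σ ≠ 0) (hΥ : 0 ≤ Υ) (hn : n ≠ 0) (j : ℕ) :
    0 < covEigenvalue σ Υ n j :=
  (sq_div_le_covEigenvalue hΥ j).trans_lt' (by positivity)

theorem inv_covEigenvalue_le (hσ : σ ≠ 0) (hΥ : 0 ≤ Υ) (hn : n ≠ 0) (j : ℕ) :
    (covEigenvalue σ Υ n j)⁻¹ ≤ n / σ ^ 2 := by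
  simpa using inv_anti₀ (by positivity) (sq_div_le_covEigenvalue (σ := σ) (n := n) hΥ j)

theorem covEigenvalue_monotoneOn (hΥ : 0 ≤ Υ) :
    MonotoneOn (covEigenvalue σ Υ n) (Set.Icc 1 (n + 1)) := by
  rintro i ⟨hi, -⟩ j ⟨-, hj⟩ hij
  have hi' : (1 : ℝ) ≤ i := by exact_mod_cast hi
  have hj' : (j : ℝ) ≤ n + 1 := by exact_mod_cast hj
  have hij' : (i : ℝ) ≤ j := by exact_mod_cast hij
  have hθi : 0 ≤ π / 2 * ((2 * (i : ℝ) - 1) / (2 * n + 1)) :=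
    mul_nonneg (by positivity) (div_nonneg (by linarith) (by positivity))
  have hθj : π / 2 * ((2 * (j : ℝ) - 1) / (2 * n + 1)) ≤ π / 2 :=
    mul_le_of_le_one_right (by positivity) ((div_le_one (by positivity)).mpr (by linarith))
  have hθ : π / 2 * ((2 * (i : ℝ) - 1) / (2 * n + 1))
      ≤ π / 2 * ((2 * (j : ℝ) - 1) / (2 * n + 1)) := by
    gcongr
  have hsin := sin_le_sin_of_le_of_le_pi_div_two (by linarith [pi_pos]) hθj hθ
  have hsin0 := sin_nonneg_of_nonneg_of_le_pi hθi (by linarith [pi_pos])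
  unfold covEigenvalue
  gcongr

theorem abs_sum_cos_odd_div_covEigenvalue_le (hσ : σ ≠ 0) (hΥ : 0 ≤ Υ) (hn : 1 ≤ n)
    {x : ℝ} (hx : sin x ≠ 0) :
    |∑ j ∈ Icc 1 n, cos (x * (2 * (j : ℝ) - 1)) / covEigenvalue σ Υ n j|
      ≤ (2 * |sin x|)⁻¹ * (n / σ ^ 2) := by
  have hn0 : n ≠ 0 := by omega
  have hanti : AntitoneOn (fun j => (covEigenvalue σ Υ n j)⁻¹) (Set.Icc 1 n) :=
    fun i hi j hj hij => inv_anti₀ (covEigenvalue_pos hσ hΥ hn0 i)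
      ((covEigenvalue_monotoneOn hΥ).mono (Set.Icc_subset_Icc_right n.le_succ) hi hj hij)
  simp only [div_eq_mul_inv]
  calc _ ≤ (2 * |sin x|)⁻¹ * (covEigenvalue σ Υ n 1)⁻¹ :=
        abs_sum_mul_le_of_antitoneOn hn (fun m _ => abs_sum_cos_odd_le hx m) hanti
          (inv_nonneg.mpr (covEigenvalue_pos hσ hΥ hn0 n).le)
    _ ≤ (2 * |sin x|)⁻¹ * (n * (σ ^ 2)⁻¹) := by
        gcongr
        simpa only [div_eq_mul_inv] using inv_covEigenvalue_le hσ hΥ hn0 1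

theorem abs_div_mul_sum_cos_odd_div_covEigenvalue_le (hσ : σ ≠ 0) (hΥ : 0 ≤ Υ)
    (hn : 1 ≤ n) {x : ℝ} (hx : sin x ≠ 0) :
    |(1 / (2 * (n : ℝ) + 1))
        * ∑ j ∈ Icc 1 n, cos (x * (2 * (j : ℝ) - 1)) / covEigenvalue σ Υ n j|
      ≤ (4 * σ ^ 2 * |sin x|)⁻¹ := by
  have hn' : (1 : ℝ) ≤ n := by exact_mod_cast hn
  rw [abs_mul, abs_of_pos (by positivity)]
  calc _ ≤ 1 / (2 * (n : ℝ) + 1) * ((2 * |sin x|)⁻¹ * (n / σ ^ 2)) := by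
        gcongr
        exact abs_sum_cos_odd_div_covEigenvalue_le hσ hΥ hn hx
    _ = n / (2 * n + 1) * (2 * σ ^ 2 * |sin x|)⁻¹ := by field_simp
    _ ≤ 1 / 2 * (2 * σ ^ 2 * |sin x|)⁻¹ := by
        gcongr ?_ * _
        rw [div_le_div_iff₀ (by positivity) two_pos]
        linarith
    _ = (4 * σ ^ 2 * |sin x|)⁻¹ := by field_simp; ring

end covEigenvalue

/-- Riemann–Lebesgue type bound: with `λ^n_j(σ) = σ²/n + 4Υ sin²[(π/2)(2j-1)/(2n+1)]`
and `τ_n → τ ∈ (-1,0) ∪ (0,1)`, the sequence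
`(1/(2n+1)) Σ_{j=1}^n cos[πτ_n(2j-1)] / λ^n_j(σ)` is bounded as `n → ∞`. -/
theorem stmt3 (σ Υ : ℝ) (hσ : 0 < σ) (hΥ : 0 < Υ)
    (τseq : ℕ → ℝ) (τ : ℝ) (hτ : Tendsto τseq atTop (nhds τ))
    (hτmem : τ ∈ Set.Ioo (-1 : ℝ) 0 ∪ Set.Ioo (0 : ℝ) 1) :
    ∃ M : ℝ, ∀ n : ℕ, 1 ≤ n →
      |(1 / (2 * (n : ℝ) + 1)) * ∑ j ∈ Finset.Icc 1 n,
          Real.cos (π * τseq n * (2 * (j : ℝ) - 1)) /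
            (σ ^ 2 / (n : ℝ)
              + 4 * Υ * Real.sin (π / 2 * ((2 * (j : ℝ) - 1) / (2 * (n : ℝ) + 1))) ^ 2)|
        ≤ M := by
  have hsin : sin (π * τ) ≠ 0 := by
    have ⟨hlo, hhi, hne⟩ : -1 < τ ∧ τ < 1 ∧ τ ≠ 0 := by
      rcases hτmem with ⟨h1, h2⟩ | ⟨h1, h2⟩
      · exact ⟨h1, by linarith, h2.ne⟩
      · exact ⟨by linarith, h2, h1.ne'⟩
    rw [Ne, sin_eq_zero_iff_of_lt_of_lt (by nlinarith [pi_pos]) (by nlinarith [pi_pos])]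
    exact mul_ne_zero pi_ne_zero hne
  have hsin_lim : Tendsto (fun n => sin (π * τseq n)) atTop (nhds (sin (π * τ))) :=
    (continuous_sin.tendsto _).comp (hτ.const_mul π)
  have hbound_lim : Tendsto (fun n => (4 * σ ^ 2 * |sin (π * τseq n)|)⁻¹) atTop
      (nhds (4 * σ ^ 2 * |sin (π * τ)|)⁻¹) :=
    (hsin_lim.abs.const_mul _).inv₀ (by positivity)
  refine Exists.imp (fun M hM n _ => hM ⟨n, rfl⟩)
    (hbound_lim.isBoundedUnder_le.mono_le ?_).bddAbove_range
  filter_upwards [eventually_ge_atTop 1, hsin_lim.eventually_ne hsin] with n hn hne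
  exact abs_div_mul_sum_cos_odd_div_covEigenvalue_le hσ.ne' hΥ.le hn hne
end

section
/- Let σ > 0 and Υ > 0, and for each n ≥ 1 define J_n = (2/π) ∫_{π/(2(2n+1))}^{π/2} dz / (σ²/n + 4Υ sin²z). Then the sequence J_n − (√n/σ)(σ²/n + 4Υ)^{−1/2} is bounded as n→∞; in particular n^{−1/2} J_n → (2σ√Υ)^{−1}. -/
/-!
Since `a + b sin² z = a cos² z + (a + b) sin² z`, the classical formula
`∫₀^{π/2} dz / (s² cos² z + t² sin² z) = π / (2 s t)`
(an antiderivative is `arctan (t tan z / s) / (s t)`) shows that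
`(2/π) ∫₀^{π/2} dz / (a + b sin² z) = 1 / (√a √(a + b))`.
With `a = σ²/n`, `b = 4Υ` this is exactly the comparison term, so `J_n` differs from it by
`(2/π) ∫₀^ε` with `ε = π/(2(2n+1))`. The integrand is at most `1/a = n/σ²`, so the difference
is at most `2ε n / (π σ²) < 1/σ²`. Multiplying by `n^{-1/2}` gives the limit.
-/

open Real Filter

section CosSqAddSinSq

variable {s t : ℝ}

lemma hasDerivAt_arctan_mul_tan_div {z : ℝ} (hs : s ≠ 0) (ht : t ≠ 0) (hz : cos z ≠ 0) :
    HasDerivAt (fun z => arctan (t * tan z / s) / (s * t))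
      (1 / (s ^ 2 * cos z ^ 2 + t ^ 2 * sin z ^ 2)) z := by
  refine ((((hasDerivAt_tan hz).const_mul t).div_const s).arctan.div_const (s * t)).congr_deriv ?_
  rw [tan_eq_sin_div_cos]
  field_simp

lemma sq_mul_cos_sq_add_sq_mul_sin_sq_pos (hs : s ≠ 0) (ht : t ≠ 0) (z : ℝ) :
    0 < s ^ 2 * cos z ^ 2 + t ^ 2 * sin z ^ 2 := by
  by_cases hsin : sin z = 0
  · have : cos z ^ 2 = 1 := by nlinarith [sin_sq_add_cos_sq z]
    rw [hsin, this]; positivity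
  · positivity

lemma continuous_one_div_sq_mul_cos_sq_add_sq_mul_sin_sq (hs : s ≠ 0) (ht : t ≠ 0) :
    Continuous fun z => 1 / (s ^ 2 * cos z ^ 2 + t ^ 2 * sin z ^ 2) :=
  continuous_const.div (by fun_prop) fun z => (sq_mul_cos_sq_add_sq_mul_sin_sq_pos hs ht z).ne'

lemma integral_zero_pi_div_four_one_div_sq_mul_cos_sq_add_sq_mul_sin_sq
    (hs : s ≠ 0) (ht : t ≠ 0) :
    ∫ z in (0)..(π / 4), 1 / (s ^ 2 * cos z ^ 2 + t ^ 2 * sin z ^ 2) =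
      arctan (t / s) / (s * t) := by
  have hderiv : ∀ z ∈ Set.uIcc 0 (π / 4),
      HasDerivAt (fun z => arctan (t * tan z / s) / (s * t))
        (1 / (s ^ 2 * cos z ^ 2 + t ^ 2 * sin z ^ 2)) z := by
    intro z hz
    rw [Set.uIcc_of_le (by positivity)] at hz
    refine hasDerivAt_arctan_mul_tan_div hs ht (cos_pos_of_mem_Ioo ⟨?_, ?_⟩).ne' <;>
      linarith [hz.1, hz.2, pi_pos]
  rw [intervalIntegral.integral_eq_sub_of_hasDerivAt hderiv
    ((continuous_one_div_sq_mul_cos_sq_add_sq_mul_sin_sq hs ht).intervalIntegrable _ _)]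
  simp

lemma integral_zero_pi_div_two_one_div_sq_mul_cos_sq_add_sq_mul_sin_sq
    (hs : 0 < s) (ht : 0 < t) :
    ∫ z in (0)..(π / 2), 1 / (s ^ 2 * cos z ^ 2 + t ^ 2 * sin z ^ 2) = π / (2 * (s * t)) := by
  have hcont := continuous_one_div_sq_mul_cos_sq_add_sq_mul_sin_sq hs.ne' ht.ne'
  -- `tan` is singular at `π/2`, so the upper quarter is reflected by `z ↦ π/2 - z`.
  have hupper : ∫ z in (π / 4)..(π / 2), 1 / (s ^ 2 * cos z ^ 2 + t ^ 2 * sin z ^ 2) =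
      ∫ z in (0)..(π / 4), 1 / (t ^ 2 * cos z ^ 2 + s ^ 2 * sin z ^ 2) := by
    have h := intervalIntegral.integral_comp_sub_left
      (fun z => 1 / (s ^ 2 * cos z ^ 2 + t ^ 2 * sin z ^ 2)) (a := 0) (b := π / 4) (π / 2)
    simp only [cos_pi_div_two_sub, sin_pi_div_two_sub, sub_zero] at h
    rw [show π / 2 - π / 4 = π / 4 by ring] at h
    rw [← h]
    simp only [add_comm (s ^ 2 * _)]
  rw [← intervalIntegral.integral_add_adjacent_intervals (b := π / 4)
      (hcont.intervalIntegrable _ _) (hcont.intervalIntegrable _ _), hupper,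
    integral_zero_pi_div_four_one_div_sq_mul_cos_sq_add_sq_mul_sin_sq hs.ne' ht.ne',
    integral_zero_pi_div_four_one_div_sq_mul_cos_sq_add_sq_mul_sin_sq ht.ne' hs.ne',
    ← inv_div t s, arctan_inv_of_pos (div_pos ht hs)]
  field_simp
  ring

end CosSqAddSinSq

lemma integral_zero_pi_div_two_one_div_add_mul_sin_sq {a b : ℝ} (ha : 0 < a) (hab : 0 < a + b) :
    ∫ z in (0)..(π / 2), 1 / (a + b * sin z ^ 2) = π / (2 * (√a * √(a + b))) := by
  rw [← integral_zero_pi_div_two_one_div_sq_mul_cos_sq_add_sq_mul_sin_sq (sqrt_pos.2 ha)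
    (sqrt_pos.2 hab)]
  congr with z
  rw [sq_sqrt ha.le, sq_sqrt hab.le]
  congr 1
  linear_combination (-a) * sin_sq_add_cos_sq z

lemma abs_two_div_pi_mul_integral_one_div_add_mul_sin_sq_sub_le {a b : ℝ} (ha : 0 < a)
    (hb : 0 ≤ b) (ε : ℝ) :
    |2 / π * (∫ z in ε..(π / 2), 1 / (a + b * sin z ^ 2)) - 1 / (√a * √(a + b))| ≤
      2 * |ε| / (π * a) := by
  have hab : 0 < a + b := by linarith
  have hpos : ∀ z, 0 < a + b * sin z ^ 2 := fun z => by positivity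
  have hint : ∀ u v,
      IntervalIntegrable (fun z => 1 / (a + b * sin z ^ 2)) MeasureTheory.volume u v :=
    fun u v => (continuous_const.div (by fun_prop) fun z => (hpos z).ne').intervalIntegrable u v
  have hinitial : |∫ z in (0)..ε, 1 / (a + b * sin z ^ 2)| ≤ 1 / a * |ε - 0| := by
    refine intervalIntegral.norm_integral_le_of_norm_le_const (E := ℝ) fun z _ => ?_
    rw [norm_of_nonneg (one_div_pos.2 (hpos z)).le]
    gcongr
    nlinarith [sq_nonneg (sin z)]
  rw [← intervalIntegral.integral_interval_sub_left (hint 0 (π / 2)) (hint 0 ε),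
    integral_zero_pi_div_two_one_div_add_mul_sin_sq ha hab]
  have hst : 0 < √a * √(a + b) := by positivity
  calc |2 / π * (π / (2 * (√a * √(a + b))) - ∫ z in (0)..ε, 1 / (a + b * sin z ^ 2))
          - 1 / (√a * √(a + b))|
      = |-(2 / π * ∫ z in (0)..ε, 1 / (a + b * sin z ^ 2))| := by
        congr 1
        field_simp
        ring
    _ = 2 / π * |∫ z in (0)..ε, 1 / (a + b * sin z ^ 2)| := by
        rw [abs_neg, abs_mul, abs_of_pos (by positivity)]
    _ ≤ 2 / π * (1 / a * |ε - 0|) := by gcongr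
    _ = 2 * |ε| / (π * a) := by
        rw [sub_zero]
        field_simp

lemma rpow_neg_one_half_eq_inv_sqrt {x : ℝ} (hx : 0 ≤ x) :
    x ^ (-(1 / 2) : ℝ) = (√x)⁻¹ := by
  rw [rpow_neg hx, sqrt_eq_rpow]

lemma sqrt_div_mul_rpow_neg_one_half {σ c x : ℝ} (hσ : 0 < σ) (hx : 0 < x) (hc : 0 ≤ c) :
    √x / σ * (σ ^ 2 / x + c) ^ (-(1 / 2) : ℝ) =
      1 / (√(σ ^ 2 / x) * √(σ ^ 2 / x + c)) := by
  rw [rpow_neg_one_half_eq_inv_sqrt (by positivity), sqrt_div' _ hx.le, sqrt_sq hσ.le]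
  have : 0 < √x := sqrt_pos.2 hx
  field_simp

lemma tendsto_rpow_neg_one_half_mul_sqrt_div_mul_rpow {σ c : ℝ} (hσ : 0 < σ) (hc : 0 < c) :
    Tendsto (fun n : ℕ => (n : ℝ) ^ (-(1 / 2) : ℝ) *
        (√n / σ * (σ ^ 2 / n + c) ^ (-(1 / 2) : ℝ)))
      atTop (nhds (σ⁻¹ * c ^ (-(1 / 2) : ℝ))) := by
  have hinner : Tendsto (fun n : ℕ => σ ^ 2 / (n : ℝ) + c) atTop (nhds c) := by
    simpa using (tendsto_const_div_atTop_nhds_zero_nat (σ ^ 2)).add_const c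
  have hlim := ((continuousAt_rpow_const _ (-(1 / 2)) (Or.inl hc.ne')).tendsto.comp
    hinner).const_mul σ⁻¹
  refine hlim.congr' ?_
  filter_upwards [eventually_gt_atTop 0] with n hn
  have hsqrt : 0 < √(n : ℝ) := sqrt_pos.2 (by exact_mod_cast hn)
  rw [Function.comp_apply, rpow_neg_one_half_eq_inv_sqrt (Nat.cast_nonneg n)]
  field_simp

lemma abs_two_div_pi_mul_integral_sub_sqrt_div_mul_rpow_le {σ c : ℝ} (hσ : 0 < σ)
    (hc : 0 ≤ c) {n : ℕ} (hn : 1 ≤ n) :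
    |2 / π * (∫ z in (π / (2 * (2 * (n : ℝ) + 1)))..(π / 2),
        1 / (σ ^ 2 / n + c * sin z ^ 2)) - √n / σ * (σ ^ 2 / n + c) ^ (-(1 / 2) : ℝ)| ≤
      1 / σ ^ 2 := by
  have hn' : (1 : ℝ) ≤ n := by exact_mod_cast hn
  rw [sqrt_div_mul_rpow_neg_one_half hσ (by positivity) hc]
  refine (abs_two_div_pi_mul_integral_one_div_add_mul_sin_sq_sub_le (by positivity) hc _).trans ?_
  rw [abs_of_pos (by positivity), div_le_div_iff₀ (by positivity) (by positivity)]
  field_simp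
  nlinarith [pi_pos]

/-- With `J_n = (2/π) ∫_{π/(2(2n+1))}^{π/2} dz/(σ²/n + 4Υ sin²z)`, the sequence
`J_n - (√n/σ)(σ²/n + 4Υ)^{-1/2}` is bounded as `n → ∞`; in particular
`n^{-1/2} J_n → (2σ√Υ)^{-1}`. -/
theorem stmt5 (σ Υ : ℝ) (hσ : 0 < σ) (hΥ : 0 < Υ) :
    (∃ M : ℝ, ∀ n : ℕ, 1 ≤ n →
      |(2 / π) * (∫ z in (π / (2 * (2 * (n : ℝ) + 1)))..(π / 2),
            1 / (σ ^ 2 / (n : ℝ) + 4 * Υ * Real.sin z ^ 2))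
          - Real.sqrt n / σ * (σ ^ 2 / (n : ℝ) + 4 * Υ) ^ (-(1 / 2) : ℝ)| ≤ M) ∧
    Tendsto (fun n : ℕ =>
        ((n : ℝ)) ^ (-(1 / 2) : ℝ) *
          ((2 / π) * ∫ z in (π / (2 * (2 * (n : ℝ) + 1)))..(π / 2),
            1 / (σ ^ 2 / (n : ℝ) + 4 * Υ * Real.sin z ^ 2)))
      atTop (nhds ((2 * σ * Real.sqrt Υ)⁻¹)) := by
  have hbound := fun n (hn : 1 ≤ n) =>
    abs_two_div_pi_mul_integral_sub_sqrt_div_mul_rpow_le hσ (by positivity : 0 ≤ 4 * Υ) hn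
  refine ⟨⟨_, hbound⟩, ?_⟩
  have herror := (tendsto_rpow_neg_atTop (by norm_num : (0 : ℝ) < 1 / 2)).comp
    tendsto_natCast_atTop_atTop |>.zero_mul_isBoundedUnder_le
      ⟨_, eventually_map.2 ((eventually_ge_atTop 1).mono hbound)⟩
  have hmain := tendsto_rpow_neg_one_half_mul_sqrt_div_mul_rpow hσ (by positivity : 0 < 4 * Υ)
  have hlimit : σ⁻¹ * (4 * Υ) ^ (-(1 / 2) : ℝ) = (2 * σ * √Υ)⁻¹ := by
    rw [rpow_neg_one_half_eq_inv_sqrt (by positivity), sqrt_mul (by norm_num),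
      show √(4 : ℝ) = 2 by rw [show (4 : ℝ) = 2 ^ 2 by norm_num, sqrt_sq zero_le_two]]
    ring
  rw [← hlimit, ← zero_add (σ⁻¹ * _)]
  exact (herror.add hmain).congr fun n => by simp only [Function.comp_apply]; ring
end

section
/- Let g : ℝ → ℝ satisfy condition [W]. Set ψ₂ = ∫_{−∞}^∞ g(x)² dx, φ_{u,v}(y) = ∫_{−∞}^∞ u(x−y)v(x) dx for functions u,v, Φ₂₂ = ∫₀^∞ φ_{g,g}(y)² dy and Φ₁₂ = ∫₀^∞ φ_{g,g}(y) φ_{g',g'}(y) dy. Then for every θ > 0 and all σ > 0, Υ > 0 one has (8/ψ₂²)(Φ₂₂ θ σ² + Φ₁₂ Υ/θ) > 8σ√Υ. In particular there is no weight function g satisfying [W] and no θ > 0 for which the jump-part asymptotic variance coefficient (8/ψ₂²)(Φ₂₂ θ σ² + Φ₁₂ Υ/θ) attains the lower bound 8σ√Υ. -/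
open Real Filter MeasureTheory

/-- `g` is piecewise `C¹` with a piecewise Lipschitz derivative `g'`: outside a finite set
of breakpoints `g` has derivative `g'`, and `g'` is Lipschitz on each piece. -/
def PiecewiseC1LipDeriv (g g' : ℝ → ℝ) : Prop :=
  ∃ s : Finset ℝ, (∀ x : ℝ, x ∉ s → HasDerivAt g (g' x) x) ∧
    ∃ L : ℝ, 0 ≤ L ∧ ∀ x y : ℝ, (∀ z ∈ s, z ∉ Set.Ioo (min x y) (max x y)) →
      |g' x - g' y| ≤ L * |x - y|

/-- Condition [W] on a weight function `g` with derivative `g'`: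
(i) `g` is continuous and piecewise `C¹` with a piecewise Lipschitz derivative `g'`;
(ii) `|g(x)| + |g'(x)| ≤ C_r (1+x²)^{-r}` for every `r > 0`;
(iii) `∫ g² > 0`. -/
structure CondW (g g' : ℝ → ℝ) : Prop where
  cont : Continuous g
  piecewise : PiecewiseC1LipDeriv g g'
  decay : ∀ r : ℝ, 0 < r → ∃ C : ℝ, ∀ x : ℝ, |g x| + |g' x| ≤ C * (1 + x ^ 2) ^ (-r)
  pos : 0 < ∫ x : ℝ, g x ^ 2

/-!
With `φ = φ_{g,g}`, `η = φ_{g',g}` and `χ = φ_{g',g'}`, differentiation under the integral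
gives `φ' = -η` and `η' = χ`; `φ` is even, so `η 0 = 0`, and `φ 0 = ψ₂`. Integrating
`(φ²)' = -2φη` and `(φη)' = φχ - η²` over `(0, ∞)` gives `∫₀^∞ φη = ψ₂² / 2` and
`Φ₁₂ = ∫₀^∞ η²`.
Hence for every `c > 0`
  `0 < ∫₀^∞ (cφ - η)² = c² Φ₂₂ - c ψ₂² + Φ₁₂`,
strictly because `cφ - η` is continuous and equals `c ψ₂ ≠ 0` at `0`. The choice `c = θσ/√Υ`
turns `ψ₂² < c Φ₂₂ + Φ₁₂ / c` into the claim.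
-/

open Topology NNReal

lemma aestronglyMeasurable_of_hasDerivAt_off_countable {f f' : ℝ → ℝ} {s : Set ℝ}
    (hs : s.Countable) (hd : ∀ x ∉ s, HasDerivAt f (f' x) x) :
    AEStronglyMeasurable f' volume :=
  (measurable_deriv f).aestronglyMeasurable.congr <|
    (hs.ae_notMem volume).mono fun x hx => (hd x hx).deriv

lemma lipschitzWith_of_hasDerivAt_off_countable {f f' : ℝ → ℝ} {s : Set ℝ} {C : ℝ≥0}
    (hs : s.Countable) (hf : Continuous f) (hd : ∀ x ∉ s, HasDerivAt f (f' x) x)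
    (hC : ∀ x, |f' x| ≤ C) : LipschitzWith C f := by
  refine LipschitzWith.of_dist_le_mul fun a b => ?_
  have hi : IntervalIntegrable f' volume b a :=
    (intervalIntegrable_const (c := (C : ℝ))).mono_fun'
      (aestronglyMeasurable_of_hasDerivAt_off_countable hs hd).restrict
      (Eventually.of_forall fun x => hC x)
  rw [dist_eq_norm, dist_eq_norm, ← integral_eq_of_hasDerivAt_off_countable f f' hs
    hf.continuousOn (fun x hx => hd x hx.2) hi]
  exact intervalIntegral.norm_integral_le_of_norm_le_const fun x _ => hC x

/-- The function `φ_{u,v}`. -/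
noncomputable def crossCorr (u v : ℝ → ℝ) (y : ℝ) : ℝ := ∫ x, u (x - y) * v x

lemma crossCorr_neg (u v : ℝ → ℝ) (y : ℝ) : crossCorr u v (-y) = crossCorr v u y := by
  have h := integral_sub_right_eq_self (μ := volume) (fun x => u (x + y) * v x) y
  simp only [sub_add_cancel] at h
  simp only [crossCorr, sub_neg_eq_add, ← h, mul_comm (v _)]

lemma hasDerivAt_crossCorr_left {u u' v : ℝ → ℝ} {K : ℝ≥0} {M : ℝ} {s : Set ℝ}
    (hs : s.Countable) (hu : LipschitzWith K u) (hd : ∀ x ∉ s, HasDerivAt u (u' x) x)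
    (hM : ∀ x, |u x| ≤ M) (hv : Integrable v) (y : ℝ) :
    HasDerivAt (crossCorr u v) (-crossCorr u' v y) y := by
  have hmeas : ∀ y, AEStronglyMeasurable (fun x => u (x - y) * v x) volume := fun y =>
    (hu.continuous.comp (continuous_sub_right y)).aestronglyMeasurable.mul hv.1
  have hu' := aestronglyMeasurable_of_hasDerivAt_off_countable hs hd
  -- `y ↦ u (x - y)` is differentiable at `y` only for a.e. `x`, hence the Lipschitz version.
  have key := hasDerivAt_integral_of_dominated_loc_of_lip (μ := volume)
    (x₀ := y) (F := fun y x => u (x - y) * v x) (F' := fun x => -(u' (x - y) * v x))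
    (bound := fun x => K * |v x|) (s := Set.univ) Filter.univ_mem
    (Eventually.of_forall hmeas)
    (hv.bdd_mul (hu.continuous.comp (continuous_sub_right y)).aestronglyMeasurable
      (Eventually.of_forall fun x => hM (x - y)))
    ((hu'.comp_quasiMeasurePreserving
      (measurePreserving_sub_right volume y).quasiMeasurePreserving).mul hv.1).neg
    (Eventually.of_forall fun x =>
      (LipschitzWith.of_dist_le_mul fun y₁ y₂ => ?_).lipschitzOnWith) (hv.abs.const_mul K) ?_
  · rw [integral_neg] at key
    exact key.2
  · have hux := hu.dist_le_mul (x - y₁) (x - y₂)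
    rw [dist_sub_left] at hux
    calc dist (u (x - y₁) * v x) (u (x - y₂) * v x) = dist (u (x - y₁)) (u (x - y₂)) * |v x| := by
          rw [Real.dist_eq, Real.dist_eq, ← sub_mul, abs_mul]
      _ ≤ K * dist y₁ y₂ * |v x| := by gcongr
      _ = Real.nnabs (K * |v x|) * dist y₁ y₂ := by
          rw [Real.coe_nnabs, abs_of_nonneg (by positivity : (0 : ℝ) ≤ K * |v x|)]; ring
  · filter_upwards [(hs.image (· + y)).ae_notMem volume] with x hx
    have hxs : x - y ∉ s := fun h => hx ⟨x - y, h, sub_add_cancel x y⟩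
    exact (((hd _ hxs).comp y ((hasDerivAt_id y).const_sub x)).mul_const (v x)).congr_deriv
      (by ring)

lemma hasDerivAt_crossCorr_right {u v v' : ℝ → ℝ} {K : ℝ≥0} {M : ℝ} {s : Set ℝ}
    (hs : s.Countable) (hv : LipschitzWith K v) (hd : ∀ x ∉ s, HasDerivAt v (v' x) x)
    (hM : ∀ x, |v x| ≤ M) (hu : Integrable u) (y : ℝ) :
    HasDerivAt (crossCorr u v) (crossCorr u v' y) y := by
  have h := (hasDerivAt_crossCorr_left hs hv hd hM hu (-y)).comp y (hasDerivAt_neg y)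
  rw [crossCorr_neg, neg_mul_neg, mul_one] at h
  exact h.congr_of_eventuallyEq (Eventually.of_forall fun z => (crossCorr_neg v u z).symm)

lemma inv_one_add_sq_mul_inv_one_add_sq_le (x y : ℝ) :
    (1 + (x - y) ^ 2)⁻¹ * (1 + x ^ 2)⁻¹ ≤
      4 * (1 + y ^ 2)⁻¹ * ((1 + (x - y) ^ 2)⁻¹ + (1 + x ^ 2)⁻¹) := by
  have hy : 1 + y ^ 2 ≤ 4 * ((1 + (x - y) ^ 2) + (1 + x ^ 2)) := by
    nlinarith [sq_nonneg (x + (x - y))]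
  rw [← sub_nonneg]
  have e : 4 * (1 + y ^ 2)⁻¹ * ((1 + (x - y) ^ 2)⁻¹ + (1 + x ^ 2)⁻¹) -
      (1 + (x - y) ^ 2)⁻¹ * (1 + x ^ 2)⁻¹ =
      (4 * ((1 + (x - y) ^ 2) + (1 + x ^ 2)) - (1 + y ^ 2)) /
        ((1 + y ^ 2) * (1 + (x - y) ^ 2) * (1 + x ^ 2)) := by
    field_simp
    ring
  rw [e]
  exact div_nonneg (by linarith) (by positivity)

lemma inv_one_add_sq_le_one (x : ℝ) : (1 + x ^ 2)⁻¹ ≤ 1 :=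
  inv_le_one_of_one_le₀ (le_add_of_nonneg_right (sq_nonneg x))

def InvSqBound (C : ℝ) (f : ℝ → ℝ) : Prop := ∀ x, |f x| ≤ C * (1 + x ^ 2)⁻¹

namespace InvSqBound

variable {C D : ℝ} {f h : ℝ → ℝ}

lemma nonneg (hf : InvSqBound C f) : 0 ≤ C := by
  simpa using (abs_nonneg _).trans (hf 0)

lemma abs_le (hf : InvSqBound C f) (x : ℝ) : |f x| ≤ C :=
  (hf x).trans (mul_le_of_le_one_right hf.nonneg (inv_one_add_sq_le_one x))

lemma integrable (hf : InvSqBound C f) (hm : AEStronglyMeasurable f volume) : Integrable f :=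
  (integrable_inv_one_add_sq.const_mul C).mono' hm (Eventually.of_forall hf)

lemma mul (hf : InvSqBound C f) (hh : InvSqBound D h) : InvSqBound (C * D) (fun x => f x * h x) :=
  fun x => calc |f x * h x| = |f x| * |h x| := abs_mul _ _
    _ ≤ C * (D * (1 + x ^ 2)⁻¹) := mul_le_mul (hf.abs_le x) (hh x) (abs_nonneg _) hf.nonneg
    _ = C * D * (1 + x ^ 2)⁻¹ := by ring

lemma tendsto_atTop (hf : InvSqBound C f) : Tendsto f atTop (𝓝 0) := by
  have h : Tendsto (fun x : ℝ => C * (1 + x ^ 2)⁻¹) atTop (𝓝 0) := by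
    simpa using ((tendsto_atTop_add_const_left _ 1
      (tendsto_pow_atTop two_ne_zero)).inv_tendsto_atTop).const_mul C
  exact squeeze_zero_norm hf h

lemma crossCorr {u v : ℝ → ℝ} (hu : InvSqBound C u) (hv : InvSqBound D v) :
    InvSqBound (8 * π * C * D) (crossCorr u v) := by
  intro y
  have hshift : Integrable fun x : ℝ => (1 + (x - y) ^ 2)⁻¹ :=
    integrable_inv_one_add_sq.comp_sub_right y
  have hdom : Integrable fun x : ℝ =>
      C * D * (4 * (1 + y ^ 2)⁻¹ * ((1 + (x - y) ^ 2)⁻¹ + (1 + x ^ 2)⁻¹)) :=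
    ((hshift.add integrable_inv_one_add_sq).const_mul _).const_mul _
  have hpt : ∀ x, |u (x - y) * v x| ≤
      C * D * (4 * (1 + y ^ 2)⁻¹ * ((1 + (x - y) ^ 2)⁻¹ + (1 + x ^ 2)⁻¹)) := fun x =>
    calc |u (x - y) * v x| = |u (x - y)| * |v x| := abs_mul _ _
      _ ≤ (C * (1 + (x - y) ^ 2)⁻¹) * (D * (1 + x ^ 2)⁻¹) :=
          mul_le_mul (hu _) (hv _) (abs_nonneg _) (by positivity [hu.nonneg])
      _ = C * D * ((1 + (x - y) ^ 2)⁻¹ * (1 + x ^ 2)⁻¹) := by ring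
      _ ≤ _ := mul_le_mul_of_nonneg_left (inv_one_add_sq_mul_inv_one_add_sq_le x y)
          (mul_nonneg hu.nonneg hv.nonneg)
  calc |_root_.crossCorr u v y| = ‖∫ x, u (x - y) * v x‖ := (Real.norm_eq_abs _).symm
    _ ≤ ∫ x, C * D * (4 * (1 + y ^ 2)⁻¹ * ((1 + (x - y) ^ 2)⁻¹ + (1 + x ^ 2)⁻¹)) :=
        norm_integral_le_of_norm_le hdom
          (Eventually.of_forall fun x => (Real.norm_eq_abs _).trans_le (hpt x))
    _ = C * D * (4 * (1 + y ^ 2)⁻¹ * (π + π)) := by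
        rw [integral_const_mul, integral_const_mul, integral_add hshift integrable_inv_one_add_sq,
          integral_sub_right_eq_self (fun x : ℝ => (1 + x ^ 2)⁻¹) y, integral_univ_inv_one_add_sq]
    _ = 8 * π * C * D * (1 + y ^ 2)⁻¹ := by ring

end InvSqBound

lemma setIntegral_Ioi_pos_of_continuous {f : ℝ → ℝ} {a : ℝ} (hf : Continuous f)
    (hnn : ∀ x, 0 ≤ f x) (ha : f a ≠ 0) (hi : IntegrableOn f (Set.Ioi a)) :
    0 < ∫ x in Set.Ioi a, f x := by
  rw [setIntegral_pos_iff_support_of_nonneg_ae (Eventually.of_forall hnn) hi]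
  obtain ⟨b, hab, hb⟩ :=
    exists_Ico_subset_of_mem_nhds (hf.isOpen_support.mem_nhds ha) ⟨a + 1, by linarith⟩
  calc 0 < volume (Set.Ioo a b) := by
        rw [Real.volume_Ioo]; exact ENNReal.ofReal_pos.2 (sub_pos.2 hab)
    _ ≤ volume (Function.support f ∩ Set.Ioi a) :=
        measure_mono fun x hx => ⟨hb (Set.Ioo_subset_Ico_self hx), hx.1⟩

theorem sq_lt_of_hasDerivAt_of_invSqBound {φ η χ : ℝ → ℝ} {D c : ℝ}
    (hφ : ∀ y, HasDerivAt φ (-η y) y) (hη : ∀ y, HasDerivAt η (χ y) y)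
    (hη0 : η 0 = 0) (hφ0 : φ 0 ≠ 0)
    (hφD : InvSqBound D φ) (hηD : InvSqBound D η) (hχD : InvSqBound D χ) (hc : 0 < c) :
    φ 0 ^ 2 < c * (∫ y in Set.Ioi 0, φ y ^ 2) + (∫ y in Set.Ioi 0, φ y * χ y) / c := by
  have hφc : Continuous φ := continuous_iff_continuousAt.2 fun y => (hφ y).continuousAt
  have hηc : Continuous η := continuous_iff_continuousAt.2 fun y => (hη y).continuousAt
  have hχm : AEStronglyMeasurable χ volume :=
    aestronglyMeasurable_of_hasDerivAt_off_countable Set.countable_empty fun y _ => hη y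
  have hφφ : Integrable fun y => φ y * φ y :=
    (hφD.mul hφD).integrable (hφc.mul hφc).aestronglyMeasurable
  have hφη : Integrable fun y => φ y * η y :=
    (hφD.mul hηD).integrable (hφc.mul hηc).aestronglyMeasurable
  have hηη : Integrable fun y => η y * η y :=
    (hηD.mul hηD).integrable (hηc.mul hηc).aestronglyMeasurable
  have hφχ : Integrable fun y => φ y * χ y :=
    (hφD.mul hχD).integrable (hφc.aestronglyMeasurable.mul hχm)
  have hIφη : ∫ y in Set.Ioi 0, φ y * η y = φ 0 ^ 2 / 2 := by
    have h := integral_Ioi_of_hasDerivAt_of_tendsto' (f := fun y => φ y * φ y)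
      (f' := fun y => -2 * (φ y * η y)) (a := 0) (m := 0)
      (fun y _ => ((hφ y).mul (hφ y)).congr_deriv (by ring)) (hφη.const_mul _).integrableOn
      (hφD.mul hφD).tendsto_atTop
    rw [integral_const_mul] at h
    linarith
  have hIφχ : ∫ y in Set.Ioi 0, φ y * χ y = ∫ y in Set.Ioi 0, η y * η y := by
    have h := integral_Ioi_of_hasDerivAt_of_tendsto' (f := fun y => φ y * η y)
      (f' := fun y => φ y * χ y - η y * η y) (a := 0) (m := 0)
      (fun y _ => ((hφ y).mul (hη y)).congr_deriv (by ring)) (hφχ.sub hηη).integrableOn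
      (hφD.mul hηD).tendsto_atTop
    rw [integral_sub hφχ.integrableOn hηη.integrableOn, hη0, mul_zero] at h
    linarith
  have hexpand : (fun y => (c * φ y - η y) ^ 2) =
      fun y => c ^ 2 * (φ y * φ y) - 2 * c * (φ y * η y) + η y * η y := by
    ext y; ring
  have hint₁ : Integrable fun y => c ^ 2 * (φ y * φ y) - 2 * c * (φ y * η y) :=
    (hφφ.const_mul _).sub (hφη.const_mul _)
  have hpos : 0 < ∫ y in Set.Ioi 0, (c * φ y - η y) ^ 2 := by
    refine setIntegral_Ioi_pos_of_continuous (by fun_prop) (fun _ => sq_nonneg _)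
      (by simp [hη0, hc.ne', hφ0]) ?_
    rw [hexpand]
    exact (hint₁.add hηη).integrableOn
  rw [hexpand, integral_add hint₁.integrableOn hηη.integrableOn,
    integral_sub (hφφ.const_mul _).integrableOn (hφη.const_mul _).integrableOn,
    integral_const_mul, integral_const_mul, hIφη, ← hIφχ] at hpos
  simp only [sq] at hpos ⊢
  rw [← sub_pos]
  have e : c * (∫ y in Set.Ioi 0, φ y * φ y) + (∫ y in Set.Ioi 0, φ y * χ y) / c - φ 0 * φ 0 =
      (c * c * (∫ y in Set.Ioi 0, φ y * φ y) - 2 * c * (φ 0 * φ 0 / 2) +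
        ∫ y in Set.Ioi 0, φ y * χ y) / c := by
    field_simp
    ring
  rw [e]
  positivity

lemma eq_zero_of_hasDerivAt_crossCorr_self {u : ℝ → ℝ} {d : ℝ}
    (h : HasDerivAt (crossCorr u u) d 0) : d = 0 := by
  have h' := (neg_zero (G := ℝ) ▸ h).comp (0 : ℝ) (hasDerivAt_neg' 0)
  rw [show crossCorr u u ∘ Neg.neg = crossCorr u u from funext (crossCorr_neg u u)] at h'
  linarith [h.unique h']

lemma mul_sqrt_lt_of_forall_sq_lt {ψ A B θ σ Υ : ℝ} (hψ : 0 < ψ) (hθ : 0 < θ) (hσ : 0 < σ)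
    (hΥ : 0 < Υ) (h : ∀ c, 0 < c → ψ ^ 2 < c * A + B / c) :
    8 * σ * √Υ < 8 / ψ ^ 2 * (A * θ * σ ^ 2 + B * Υ / θ) := by
  have hΥ' : 0 < √Υ := Real.sqrt_pos.2 hΥ
  have hsplit : A * θ * σ ^ 2 + B * Υ / θ = σ * √Υ * (θ * σ / √Υ * A + B / (θ * σ / √Υ)) := by
    field_simp
    rw [Real.sq_sqrt hΥ.le]
  calc 8 * σ * √Υ = 8 / ψ ^ 2 * (σ * √Υ * ψ ^ 2) := by field_simp
    _ < 8 / ψ ^ 2 * (σ * √Υ * (θ * σ / √Υ * A + B / (θ * σ / √Υ))) := by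
        gcongr
        exact h _ (by positivity)
    _ = _ := by rw [hsplit]

namespace CondW

variable {g g' : ℝ → ℝ}

lemma exists_invSqBound (hW : CondW g g') : ∃ C, InvSqBound C g ∧ InvSqBound C g' := by
  obtain ⟨C, hC⟩ := hW.decay 1 one_pos
  refine ⟨C, fun x => ?_, fun x => ?_⟩ <;>
  · have := hC x
    rw [Real.rpow_neg_one] at this
    linarith [abs_nonneg (g x), abs_nonneg (g' x)]

lemma hasDerivAt_crossCorr (hW : CondW g g') (y : ℝ) :
    HasDerivAt (crossCorr g g) (-crossCorr g' g y) y ∧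
      HasDerivAt (crossCorr g' g) (crossCorr g' g' y) y := by
  obtain ⟨s, hds, -⟩ := hW.piecewise
  obtain ⟨C, hg, hg'⟩ := hW.exists_invSqBound
  have hs : (s : Set ℝ).Countable := s.countable_toSet
  have hlip : LipschitzWith C.toNNReal g := lipschitzWith_of_hasDerivAt_off_countable hs
    hW.cont hds fun x => (hg'.abs_le x).trans (Real.le_coe_toNNReal C)
  exact ⟨hasDerivAt_crossCorr_left hs hlip hds hg.abs_le
      (hg.integrable hW.cont.aestronglyMeasurable) y,
    hasDerivAt_crossCorr_right hs hlip hds hg.abs_le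
      (hg'.integrable (aestronglyMeasurable_of_hasDerivAt_off_countable hs hds)) y⟩

end CondW

/-- No weight function satisfying [W] attains the efficiency bound `8σ√Υ` for the
jump-part asymptotic variance: for every `θ > 0`, `σ > 0`, `Υ > 0` one has the strict
inequality `(8/ψ₂²)(Φ₂₂ θ σ² + Φ₁₂ Υ/θ) > 8σ√Υ`, where `ψ₂ = ∫ g²`,
`Φ₂₂ = ∫₀^∞ φ_{g,g}(y)² dy` and `Φ₁₂ = ∫₀^∞ φ_{g,g}(y)φ_{g',g'}(y) dy` with
`φ_{u,v}(y) = ∫ u(x-y)v(x) dx`. -/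
theorem stmt7 (g g' : ℝ → ℝ) (hW : CondW g g')
    (θ σ Υ : ℝ) (hθ : 0 < θ) (hσ : 0 < σ) (hΥ : 0 < Υ) :
    8 * σ * Real.sqrt Υ <
      8 / (∫ x : ℝ, g x ^ 2) ^ 2 *
        ((∫ y in Set.Ioi (0 : ℝ), (∫ x : ℝ, g (x - y) * g x) ^ 2) * θ * σ ^ 2
          + (∫ y in Set.Ioi (0 : ℝ),
              (∫ x : ℝ, g (x - y) * g x) * (∫ x : ℝ, g' (x - y) * g' x)) * Υ / θ) := by
  obtain ⟨C, hg, hg'⟩ := hW.exists_invSqBound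
  have hψ : crossCorr g g 0 = ∫ x, g x ^ 2 := by simp [crossCorr, sq]
  refine mul_sqrt_lt_of_forall_sq_lt hW.pos hθ hσ hΥ fun c hc => ?_
  have key := sq_lt_of_hasDerivAt_of_invSqBound (fun y => (hW.hasDerivAt_crossCorr y).1)
    (fun y => (hW.hasDerivAt_crossCorr y).2)
    (neg_eq_zero.1 (eq_zero_of_hasDerivAt_crossCorr_self (hW.hasDerivAt_crossCorr 0).1))
    (hψ ▸ hW.pos.ne') (hg.crossCorr hg) (hg'.crossCorr hg) (hg'.crossCorr hg') hc
  rwa [hψ] at key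
end

section
/- For every y ∈ ℝ, ∫_{−∞}^∞ e^{−|x−y|} e^{−|x|} dx = (1 + |y|) e^{−|y|}. In other words, for the weight function g(x) = e^{−|x|}, the autocorrelation function φ_{g,g}(y) = ∫_{−∞}^∞ g(x−y)g(x) dx equals the optimal flat-top realized-kernel function K_opt(y) = (1+|y|)e^{−|y|}. -/
/-!
Since `|a| + |b| = max |a + b| |a - b|`, the integrand is `exp (-max |2x - y| |y|)`, and the
substitution `t = 2x - y` turns the integral into half of `∫ exp (-max |t| |y|) dt`. That
integrand is the constant `exp (-|y|)` on `[-|y|, |y|]`, contributing `2|y| exp (-|y|)`, and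
equals `exp (-|t|)` outside, where the two tails contribute `2 exp (-|y|)`.
-/

open Real MeasureTheory Set

theorem abs_add_abs_eq_max_abs_add_abs_sub {α : Type*} [AddCommGroup α] [LinearOrder α]
    [IsOrderedAddMonoid α] (a b : α) : |a| + |b| = max |a + b| |a - b| := by
  grind [abs_cases]

theorem integral_Ioi_exp_neg_max {c : ℝ} (hc : 0 ≤ c) :
    ∫ t in Ioi 0, exp (-max t c) = (1 + c) * exp (-c) := by
  have hcont : Continuous fun t : ℝ => exp (-max t c) := by fun_prop
  have hconst : ∫ t in Ioc 0 c, exp (-max t c) = c * exp (-c) := by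
    rw [setIntegral_congr_fun measurableSet_Ioc (g := fun _ => exp (-c))
      fun t ht => by rw [max_eq_right ht.2], setIntegral_const, Real.volume_real_Ioc_of_le hc,
      sub_zero, smul_eq_mul]
  have htail_eq : EqOn (fun t => exp (-max t c)) (fun t => exp (-t)) (Ioi c) :=
    fun t ht => by simp only [max_eq_left (mem_Ioi.1 ht).le]
  have htail : ∫ t in Ioi c, exp (-max t c) = exp (-c) := by
    rw [setIntegral_congr_fun measurableSet_Ioi htail_eq, integral_exp_neg_Ioi]
  rw [← Ioc_union_Ioi_eq_Ioi hc, setIntegral_union (Ioc_disjoint_Ioi le_rfl) measurableSet_Ioi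
    hcont.integrableOn_Ioc
    ((integrableOn_exp_neg_Ioi c).congr_fun htail_eq.symm measurableSet_Ioi),
    hconst, htail]
  ring

theorem integral_exp_neg_max_abs {c : ℝ} (hc : 0 ≤ c) :
    ∫ t, exp (-max |t| c) = 2 * ((1 + c) * exp (-c)) := by
  rw [integral_comp_abs (f := fun t => exp (-max t c)), integral_Ioi_exp_neg_max hc]

theorem integral_comp_mul_left_sub {E : Type*} [NormedAddCommGroup E] [NormedSpace ℝ E]
    (g : ℝ → E) {a : ℝ} (ha : a ≠ 0) (y : ℝ) : ∫ x, g (a * x - y) = |a⁻¹| • ∫ x, g x := by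
  have h : ∀ x : ℝ, a * x - y = a * (x - y / a) := fun x => by field_simp
  simp_rw [h]
  rw [integral_sub_right_eq_self (fun x => g (a * x)), Measure.integral_comp_mul_left]

/-- For the double exponential weight function `g(x) = e^{-|x|}`, the autocorrelation
function `φ_{g,g}(y) = ∫ g(x-y) g(x) dx` equals the optimal flat-top realized-kernel
function `K_opt(y) = (1+|y|) e^{-|y|}`. -/
theorem stmt9 (y : ℝ) :
    (∫ x : ℝ, Real.exp (-|x - y|) * Real.exp (-|x|)) = (1 + |y|) * Real.exp (-|y|) := by
  have h : ∀ x, exp (-|x - y|) * exp (-|x|) = exp (-max |2 * x - y| |y|) := fun x => by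
    rw [← exp_add, ← neg_add, abs_add_abs_eq_max_abs_add_abs_sub, ← abs_neg (x - y - x)]
    ring_nf
  simp_rw [h]
  rw [integral_comp_mul_left_sub (fun t => exp (-max |t| |y|)) two_ne_zero,
    integral_exp_neg_max_abs (abs_nonneg y), smul_eq_mul, abs_of_pos (by norm_num)]
  ring
end

section
/- Let g(x) = e^{−|x|} with derivative (defined a.e. and used in all integrals) g'(x) = −sgn(x) e^{−|x|}. Set ψ₂ = ∫_{−∞}^∞ g(x)² dx, φ_{u,v}(y) = ∫_{−∞}^∞ u(x−y)v(x) dx, Φ₂₂ = ∫₀^∞ φ_{g,g}(y)² dy, Φ₁₂ = ∫₀^∞ φ_{g,g}(y)φ_{g',g'}(y) dy, Φ₁₁ = ∫₀^∞ φ_{g',g'}(y)² dy. Then ψ₂ = 1, Φ₂₂ = 5/4, Φ₁₂ = 1/4, Φ₁₁ = 1/4, and for all σ > 0, Υ > 0 the function θ ↦ (4/ψ₂²)(Φ₂₂ θ σ⁴ + 2Φ₁₂ σ²Υ/θ + Φ₁₁ Υ²/θ³) on (0,∞) attains its minimum value 8σ³√Υ at θ = √Υ/σ. In particular, the modulated realized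 covariance estimator with the double exponential weight function and this oracle tuning parameter achieves the parametric efficiency bound 8σ³√Υ for its asymptotic variance. -/
open Real Filter MeasureTheory

/-- The double exponential weight function `g(x) = e^{-|x|}`. -/
noncomputable def gDE (x : ℝ) : ℝ := Real.exp (-|x|)

/-- Its derivative (defined a.e.): `g'(x) = -sgn(x) e^{-|x|}`. -/
noncomputable def gDE' (x : ℝ) : ℝ := -Real.sign x * Real.exp (-|x|)

/-- `φ_{u,v}(y) = ∫ u(x-y) v(x) dx`. -/
noncomputable def phiAC (u v : ℝ → ℝ) (y : ℝ) : ℝ := ∫ x : ℝ, u (x - y) * v x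

/-!
Split `ℝ` at `0` and `y ≥ 0`: on the three pieces `g(x - y) g(x)` equals `e^{-y} e^{2x}`, `e^{-y}`
and `e^{y} e^{-2x}`, so `φ_{g,g}(y) = (1 + y) e^{-y}`, and `g'(x - y) g'(x)` is the same function
with its sign flipped on `(0, y)`, so `φ_{g',g'}(y) = (1 - y) e^{-y}`. Then `ψ₂ = φ_{g,g}(0) = 1`
and the `Φ`'s are Gamma integrals of quadratics against `e^{-2y}`. With these constants,
`θ³ (v_C² - 8σ³√Υ) = (t - √Υ)² (5t² + 2t√Υ + Υ)` for `t = θσ`.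
-/

open Set
open scoped Nat

lemma integral_eq_integral_Iio_add_Ioo_add_Ioi {E : Type*} [NormedAddCommGroup E]
    [NormedSpace ℝ E] {μ : Measure ℝ} [NullSingletonClass μ] {f : ℝ → E} {a b : ℝ} (hab : a ≤ b)
    (h₁ : IntegrableOn f (Iio a) μ) (h₂ : IntegrableOn f (Ioo a b) μ)
    (h₃ : IntegrableOn f (Ioi b) μ) :
    ∫ x, f x ∂μ = (∫ x in Iio a, f x ∂μ) + (∫ x in Ioo a b, f x ∂μ) + ∫ x in Ioi b, f x ∂μ := by
  rw [← integrableOn_Icc_iff_integrableOn_Ioo] at h₂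
  have h₁₂ : IntegrableOn f (Iic b) μ := by
    rw [← Iio_union_Icc_eq_Iic hab]
    exact h₁.union h₂
  rw [← intervalIntegral.integral_Iic_add_Ioi h₁₂ h₃, ← Iio_union_Icc_eq_Iic hab,
    setIntegral_union ((Iio_disjoint_Ici le_rfl).mono_right Icc_subset_Ici_self)
      measurableSet_Icc h₁ h₂,
    integral_Icc_eq_integral_Ioo]

lemma integral_pow_mul_exp_neg_mul_Ioi (n : ℕ) {r : ℝ} (hr : 0 < r) :
    ∫ x in Ioi (0 : ℝ), x ^ n * exp (-(r * x)) = n ! / r ^ (n + 1) := by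
  have h := integral_rpow_mul_exp_neg_mul_Ioi (a := n + 1) (by positivity) hr
  simp only [add_sub_cancel_right, rpow_natCast] at h
  rw [h, Gamma_nat_eq_factorial, ← Nat.cast_add_one, rpow_natCast, div_pow, one_pow]
  ring

lemma integrableOn_pow_mul_exp_neg_mul_Ioi (n : ℕ) {r : ℝ} (hr : 0 < r) :
    IntegrableOn (fun x ↦ x ^ n * exp (-(r * x))) (Ioi 0) :=
  Integrable.of_integral_ne_zero <| by
    rw [integral_pow_mul_exp_neg_mul_Ioi n hr]
    positivity

lemma integral_quadratic_mul_exp_neg_mul_Ioi (a b c : ℝ) {r : ℝ} (hr : 0 < r) :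
    ∫ y in Ioi (0 : ℝ), (a * y ^ 2 + b * y + c) * exp (-(r * y))
      = 2 * a / r ^ 3 + b / r ^ 2 + c / r := by
  have hint (n : ℕ) := integrableOn_pow_mul_exp_neg_mul_Ioi n hr
  have expand : ∀ y : ℝ, (a * y ^ 2 + b * y + c) * exp (-(r * y))
      = a * (y ^ 2 * exp (-(r * y))) + b * (y ^ 1 * exp (-(r * y)))
        + c * (y ^ 0 * exp (-(r * y))) := fun y ↦ by ring
  simp_rw [expand]
  rw [integral_add ?_ ((hint 0).const_mul c),
    integral_add ((hint 2).const_mul a) ((hint 1).const_mul b), integral_const_mul,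
    integral_const_mul, integral_const_mul, integral_pow_mul_exp_neg_mul_Ioi 2 hr,
    integral_pow_mul_exp_neg_mul_Ioi 1 hr, integral_pow_mul_exp_neg_mul_Ioi 0 hr]
  · norm_num [Nat.factorial]
    ring
  · exact ((hint 2).const_mul a).add ((hint 1).const_mul b)

section Autocorrelation

variable {y : ℝ}

lemma gDE_sub_mul_gDE (x y : ℝ) : gDE (x - y) * gDE x = exp (-(|x - y| + |x|)) := by
  rw [gDE, gDE, ← exp_add, neg_add]

lemma gDE_sub_mul_gDE_of_lt_zero (hy : 0 ≤ y) {x : ℝ} (hx : x < 0) :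
    gDE (x - y) * gDE x = exp (-y) * exp (2 * x) := by
  rw [gDE_sub_mul_gDE, abs_of_neg (by linarith), abs_of_neg hx, ← exp_add]
  ring_nf

lemma gDE_sub_mul_gDE_of_mem_Ioo {x : ℝ} (hx : x ∈ Ioo 0 y) :
    gDE (x - y) * gDE x = exp (-y) := by
  rw [gDE_sub_mul_gDE, abs_of_neg (by linarith [hx.2]), abs_of_pos hx.1]
  ring_nf

lemma gDE_sub_mul_gDE_of_lt (hy : 0 ≤ y) {x : ℝ} (hx : y < x) :
    gDE (x - y) * gDE x = exp y * exp (-2 * x) := by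
  rw [gDE_sub_mul_gDE, abs_of_pos (by linarith), abs_of_pos (by linarith), ← exp_add]
  ring_nf

lemma gDE'_sub_mul_gDE' (x y : ℝ) :
    gDE' (x - y) * gDE' x = Real.sign (x - y) * Real.sign x * (gDE (x - y) * gDE x) := by
  rw [gDE', gDE', gDE, gDE]
  ring

lemma integrableOn_Iio_gDE_sub_mul_gDE (hy : 0 ≤ y) :
    IntegrableOn (fun x ↦ gDE (x - y) * gDE x) (Iio 0) := by
  refine IntegrableOn.congr_fun ?_ (fun x hx ↦ (gDE_sub_mul_gDE_of_lt_zero hy hx).symm)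
    measurableSet_Iio
  exact ((integrableOn_exp_mul_Iic two_pos 0).mono_set Iio_subset_Iic_self).const_mul _

lemma integral_Iio_gDE_sub_mul_gDE (hy : 0 ≤ y) :
    ∫ x in Iio 0, gDE (x - y) * gDE x = exp (-y) / 2 := by
  rw [setIntegral_congr_fun measurableSet_Iio (fun x hx ↦ gDE_sub_mul_gDE_of_lt_zero hy hx),
    integral_const_mul, ← integral_Iic_eq_integral_Iio, integral_exp_mul_Iic two_pos]
  simp [div_eq_mul_inv]

lemma integrableOn_Ioo_gDE_sub_mul_gDE : IntegrableOn (fun x ↦ gDE (x - y) * gDE x) (Ioo 0 y) :=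
  (integrableOn_const measure_Ioo_lt_top.ne).congr_fun
    (fun _ hx ↦ (gDE_sub_mul_gDE_of_mem_Ioo hx).symm) measurableSet_Ioo

lemma integral_Ioo_gDE_sub_mul_gDE (hy : 0 ≤ y) :
    ∫ x in Ioo 0 y, gDE (x - y) * gDE x = y * exp (-y) := by
  rw [setIntegral_congr_fun measurableSet_Ioo (fun x hx ↦ gDE_sub_mul_gDE_of_mem_Ioo hx),
    setIntegral_const, volume_real_Ioo_of_le hy, sub_zero, smul_eq_mul]

lemma integrableOn_Ioi_gDE_sub_mul_gDE (hy : 0 ≤ y) :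
    IntegrableOn (fun x ↦ gDE (x - y) * gDE x) (Ioi y) :=
  IntegrableOn.congr_fun
    (Integrable.const_mul (integrableOn_exp_mul_Ioi (by norm_num : (-2 : ℝ) < 0) y) _)
    (fun _ hx ↦ (gDE_sub_mul_gDE_of_lt hy hx).symm) measurableSet_Ioi

lemma integral_Ioi_gDE_sub_mul_gDE (hy : 0 ≤ y) :
    ∫ x in Ioi y, gDE (x - y) * gDE x = exp (-y) / 2 := by
  rw [setIntegral_congr_fun measurableSet_Ioi (fun x hx ↦ gDE_sub_mul_gDE_of_lt hy hx),
    integral_const_mul, integral_exp_mul_Ioi (by norm_num), neg_div_neg_eq,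
    mul_div_assoc', ← exp_add]
  ring_nf

lemma gDE'_sub_mul_gDE'_of_lt_zero (hy : 0 ≤ y) {x : ℝ} (hx : x < 0) :
    gDE' (x - y) * gDE' x = gDE (x - y) * gDE x := by
  rw [gDE'_sub_mul_gDE', Real.sign_of_neg (by linarith), Real.sign_of_neg hx]
  ring

lemma gDE'_sub_mul_gDE'_of_mem_Ioo {x : ℝ} (hx : x ∈ Ioo 0 y) :
    gDE' (x - y) * gDE' x = -(gDE (x - y) * gDE x) := by
  rw [gDE'_sub_mul_gDE', Real.sign_of_neg (by linarith [hx.2]), Real.sign_of_pos hx.1]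
  ring

lemma gDE'_sub_mul_gDE'_of_lt (hy : 0 ≤ y) {x : ℝ} (hx : y < x) :
    gDE' (x - y) * gDE' x = gDE (x - y) * gDE x := by
  rw [gDE'_sub_mul_gDE', Real.sign_of_pos (by linarith), Real.sign_of_pos (by linarith)]
  ring

lemma phiAC_gDE_gDE (hy : 0 ≤ y) : phiAC gDE gDE y = (1 + y) * exp (-y) := by
  rw [phiAC, integral_eq_integral_Iio_add_Ioo_add_Ioi hy (integrableOn_Iio_gDE_sub_mul_gDE hy)
      integrableOn_Ioo_gDE_sub_mul_gDE (integrableOn_Ioi_gDE_sub_mul_gDE hy),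
    integral_Iio_gDE_sub_mul_gDE hy, integral_Ioo_gDE_sub_mul_gDE hy,
    integral_Ioi_gDE_sub_mul_gDE hy]
  ring

lemma phiAC_gDE'_gDE' (hy : 0 ≤ y) : phiAC gDE' gDE' y = (1 - y) * exp (-y) := by
  have h₁ : EqOn (fun x ↦ gDE' (x - y) * gDE' x) (fun x ↦ gDE (x - y) * gDE x) (Iio 0) :=
    fun _ hx ↦ gDE'_sub_mul_gDE'_of_lt_zero hy hx
  have h₂ : EqOn (fun x ↦ gDE' (x - y) * gDE' x) (fun x ↦ -(gDE (x - y) * gDE x)) (Ioo 0 y) :=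
    fun _ hx ↦ gDE'_sub_mul_gDE'_of_mem_Ioo hx
  have h₃ : EqOn (fun x ↦ gDE' (x - y) * gDE' x) (fun x ↦ gDE (x - y) * gDE x) (Ioi y) :=
    fun _ hx ↦ gDE'_sub_mul_gDE'_of_lt hy hx
  rw [phiAC, integral_eq_integral_Iio_add_Ioo_add_Ioi hy
      ((integrableOn_Iio_gDE_sub_mul_gDE hy).congr_fun h₁.symm measurableSet_Iio)
      (integrableOn_Ioo_gDE_sub_mul_gDE.neg.congr_fun h₂.symm measurableSet_Ioo)
      ((integrableOn_Ioi_gDE_sub_mul_gDE hy).congr_fun h₃.symm measurableSet_Ioi),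
    setIntegral_congr_fun measurableSet_Iio h₁, setIntegral_congr_fun measurableSet_Ioo h₂,
    setIntegral_congr_fun measurableSet_Ioi h₃, integral_neg, integral_Iio_gDE_sub_mul_gDE hy,
    integral_Ioo_gDE_sub_mul_gDE hy, integral_Ioi_gDE_sub_mul_gDE hy]
  ring

end Autocorrelation

lemma integral_gDE_sq : ∫ x, gDE x ^ 2 = 1 := by
  simpa [phiAC, sq] using phiAC_gDE_gDE le_rfl

lemma integral_Ioi_phiAC_gDE_gDE_sq : ∫ y in Ioi 0, phiAC gDE gDE y ^ 2 = 5 / 4 := by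
  have h : ∀ y ∈ Ioi (0 : ℝ), phiAC gDE gDE y ^ 2 = (1 * y ^ 2 + 2 * y + 1) * exp (-(2 * y)) :=
      fun y hy ↦ by
    rw [phiAC_gDE_gDE (le_of_lt hy), mul_pow, ← exp_nat_mul]
    ring_nf
  rw [setIntegral_congr_fun measurableSet_Ioi h,
    integral_quadratic_mul_exp_neg_mul_Ioi _ _ _ two_pos]
  norm_num

lemma integral_Ioi_phiAC_gDE_gDE_mul_phiAC_gDE'_gDE' :
    ∫ y in Ioi 0, phiAC gDE gDE y * phiAC gDE' gDE' y = 1 / 4 := by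
  have h : ∀ y ∈ Ioi (0 : ℝ), phiAC gDE gDE y * phiAC gDE' gDE' y
      = (-1 * y ^ 2 + 0 * y + 1) * exp (-(2 * y)) := fun y hy ↦ by
    rw [phiAC_gDE_gDE (le_of_lt hy), phiAC_gDE'_gDE' (le_of_lt hy),
      mul_mul_mul_comm, ← exp_add]
    ring_nf
  rw [setIntegral_congr_fun measurableSet_Ioi h,
    integral_quadratic_mul_exp_neg_mul_Ioi _ _ _ two_pos]
  norm_num

lemma integral_Ioi_phiAC_gDE'_gDE'_sq : ∫ y in Ioi 0, phiAC gDE' gDE' y ^ 2 = 1 / 4 := by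
  have h : ∀ y ∈ Ioi (0 : ℝ), phiAC gDE' gDE' y ^ 2 = (1 * y ^ 2 + -2 * y + 1) * exp (-(2 * y)) :=
      fun y hy ↦ by
    rw [phiAC_gDE'_gDE' (le_of_lt hy), mul_pow, ← exp_nat_mul]
    ring_nf
  rw [setIntegral_congr_fun measurableSet_Ioi h,
    integral_quadratic_mul_exp_neg_mul_Ioi _ _ _ two_pos]
  norm_num

/-- The asymptotic variance `v_C(g, θ)²` of the modulated realized covariance estimator. -/
noncomputable def modulatedRCAsymVar (ψ₂ Φ₂₂ Φ₁₂ Φ₁₁ σ Υ θ : ℝ) : ℝ :=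
  4 / ψ₂ ^ 2 * (Φ₂₂ * θ * σ ^ 4 + 2 * Φ₁₂ * σ ^ 2 * Υ / θ + Φ₁₁ * Υ ^ 2 / θ ^ 3)

lemma modulatedRCAsymVar_doubleExp_oracle {σ s : ℝ} (hσ : 0 < σ) (hs : 0 < s) :
    modulatedRCAsymVar 1 (5 / 4) (1 / 4) (1 / 4) σ (s ^ 2) (s / σ) = 8 * σ ^ 3 * s := by
  unfold modulatedRCAsymVar
  field_simp
  ring

lemma le_modulatedRCAsymVar_doubleExp {σ s θ : ℝ} (hσ : 0 < σ) (hs : 0 < s) (hθ : 0 < θ) :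
    8 * σ ^ 3 * s ≤ modulatedRCAsymVar 1 (5 / 4) (1 / 4) (1 / 4) σ (s ^ 2) θ := by
  have expand : modulatedRCAsymVar 1 (5 / 4) (1 / 4) (1 / 4) σ (s ^ 2) θ
      = (5 * (θ * σ) ^ 4 + 2 * (θ * σ) ^ 2 * s ^ 2 + s ^ 4) / θ ^ 3 := by
    unfold modulatedRCAsymVar
    field_simp
  have key : 0 ≤ (θ * σ - s) ^ 2 * (5 * (θ * σ) ^ 2 + 2 * (θ * σ) * s + s ^ 2) := by positivity
  rw [expand, le_div_iff₀ (by positivity)]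
  nlinarith

/-- For the double exponential weight function `g(x) = e^{-|x|}`:
`ψ₂ = 1`, `Φ₂₂ = 5/4`, `Φ₁₂ = 1/4`, `Φ₁₁ = 1/4`, and for all `σ, Υ > 0` the asymptotic
variance `θ ↦ (4/ψ₂²)(Φ₂₂θσ⁴ + 2Φ₁₂σ²Υ/θ + Φ₁₁Υ²/θ³)` attains its minimum value
`8σ³√Υ` over `θ ∈ (0,∞)` at `θ = √Υ/σ`, the parametric efficiency bound. -/
theorem stmt11 :
    (∫ x : ℝ, gDE x ^ 2) = 1 ∧
    (∫ y in Set.Ioi (0 : ℝ), phiAC gDE gDE y ^ 2) = 5 / 4 ∧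
    (∫ y in Set.Ioi (0 : ℝ), phiAC gDE gDE y * phiAC gDE' gDE' y) = 1 / 4 ∧
    (∫ y in Set.Ioi (0 : ℝ), phiAC gDE' gDE' y ^ 2) = 1 / 4 ∧
    ∀ σ Υ : ℝ, 0 < σ → 0 < Υ →
      (4 / (∫ x : ℝ, gDE x ^ 2) ^ 2 *
          ((∫ y in Set.Ioi (0 : ℝ), phiAC gDE gDE y ^ 2) * (Real.sqrt Υ / σ) * σ ^ 4
            + 2 * (∫ y in Set.Ioi (0 : ℝ), phiAC gDE gDE y * phiAC gDE' gDE' y)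
                * σ ^ 2 * Υ / (Real.sqrt Υ / σ)
            + (∫ y in Set.Ioi (0 : ℝ), phiAC gDE' gDE' y ^ 2) * Υ ^ 2
                / (Real.sqrt Υ / σ) ^ 3)
        = 8 * σ ^ 3 * Real.sqrt Υ) ∧
      ∀ θ : ℝ, 0 < θ →
        8 * σ ^ 3 * Real.sqrt Υ ≤
          4 / (∫ x : ℝ, gDE x ^ 2) ^ 2 *
            ((∫ y in Set.Ioi (0 : ℝ), phiAC gDE gDE y ^ 2) * θ * σ ^ 4
              + 2 * (∫ y in Set.Ioi (0 : ℝ), phiAC gDE gDE y * phiAC gDE' gDE' y)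
                  * σ ^ 2 * Υ / θ
              + (∫ y in Set.Ioi (0 : ℝ), phiAC gDE' gDE' y ^ 2) * Υ ^ 2 / θ ^ 3) := by
  simp only [integral_gDE_sq, integral_Ioi_phiAC_gDE_gDE_sq,
    integral_Ioi_phiAC_gDE_gDE_mul_phiAC_gDE'_gDE', integral_Ioi_phiAC_gDE'_gDE'_sq, true_and]
  intro σ Υ hσ hΥ
  obtain ⟨s, hs, rfl⟩ : ∃ s : ℝ, 0 < s ∧ s ^ 2 = Υ :=
    ⟨√Υ, Real.sqrt_pos.2 hΥ, Real.sq_sqrt hΥ.le⟩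
  rw [Real.sqrt_sq hs.le]
  exact ⟨modulatedRCAsymVar_doubleExp_oracle hσ hs,
    fun θ hθ ↦ le_modulatedRCAsymVar_doubleExp hσ hs hθ⟩
end
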